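/- Let R be a semisimple Artinian ring, I a left ideal, a ∈ R, and write Ra + I = Re for an idempotent e. Then there exists i ∈ I such that a + i = u·e for some unit u ∈ R. -/

import Mathlib

/-!
Let `F = {x | x * e = 0}`, so that `R = Re ⊕ F`; modularity then yields a complement `C` of `Ra`
lying in `I + F`. Right multiplication by `a` maps a complement `K` of the left annihilator `L`
of `a` isomorphically onto `Ra`, so `L ⊕ K ≅ R ≅ C ⊕ Ra` with `K ≅ Ra`.

Cancellation in semisimple modules of finite length gives `L ≅ C`. It is proved one simple
summand at a time: two isomorphic simple submodules are equal or disjoint, and disjoint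
isomorphic submodules `p`, `q` have the isomorphic complements `q ⊔ w`, `p ⊔ w`, where `w` is
a complement of `p ⊔ q`.

Gluing `L ≅ C` with `K ≅ Ra` yields an automorphism of the left module `R`, i.e. right
multiplication by a unit `u`, with `u - a ∈ C`. Since `Ce ⊆ I` and `ae = a`, `ue = a + i` with
`i ∈ I`.
-/

open Submodule

section Cancellation

variable {R M : Type*} [Ring R] [AddCommGroup M] [Module R M]

noncomputable def Submodule.prodEquivOfDisjoint {p q : Submodule R M} (h : Disjoint p q) :
    (p × q) ≃ₗ[R] ↥(p ⊔ q) :=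
  (LinearEquiv.ofInjective (p.subtype.coprod q.subtype) (by
    rw [← LinearMap.ker_eq_bot, LinearMap.ker_coprod_of_disjoint_range _ _
      (by simpa only [range_subtype] using h)]
    simp)).trans (.ofEq _ _ (by rw [LinearMap.range_coprod, range_subtype, range_subtype]))

theorem Submodule.nonempty_quotientEquiv_of_disjoint [IsSemisimpleModule R M]
    {p q : Submodule R M} (h : Disjoint p q) (e : p ≃ₗ[R] q) :
    Nonempty ((M ⧸ p) ≃ₗ[R] (M ⧸ q)) := by
  obtain ⟨w, hw⟩ := ComplementedLattice.exists_isCompl (p ⊔ q)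
  have hp : IsCompl p (q ⊔ w) := h.isCompl_sup_right_of_isCompl_sup_left hw
  have hq : IsCompl q (p ⊔ w) :=
    h.symm.isCompl_sup_right_of_isCompl_sup_left (sup_comm p q ▸ hw)
  exact ⟨(quotientEquivOfIsCompl p _ hp).trans <|
    (prodEquivOfDisjoint (hw.disjoint.mono_left le_sup_right)).symm.trans <|
    (e.symm.prodCongr (.refl R w)).trans <|
    (prodEquivOfDisjoint (hw.disjoint.mono_left le_sup_left)).trans
    (quotientEquivOfIsCompl q _ hq).symm⟩

theorem Submodule.nonempty_quotientEquiv_of_isSimpleModule [IsSemisimpleModule R M]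
    {p q : Submodule R M} [hp : IsSimpleModule R p] (e : p ≃ₗ[R] q) :
    Nonempty ((M ⧸ p) ≃ₗ[R] (M ⧸ q)) := by
  obtain rfl | hne := eq_or_ne p q
  · exact ⟨.refl R _⟩
  have hq : IsSimpleModule R q := .congr e.symm
  exact nonempty_quotientEquiv_of_disjoint
    ((isSimpleModule_iff_isAtom.mp hp).disjoint_of_ne (isSimpleModule_iff_isAtom.mp hq) hne) e

instance IsSemisimpleModule.prod {N : Type*} [AddCommGroup N] [Module R N]
    [IsSemisimpleModule R M] [IsSemisimpleModule R N] : IsSemisimpleModule R (M × N) := by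
  have := IsSemisimpleModule.sup (.range (LinearMap.inl R M N)) (.range (LinearMap.inr R M N))
  rw [LinearMap.sup_range_inl_inr] at this
  exact .congr topEquiv.symm

variable {S N N' : Type*} [AddCommGroup S] [Module R S] [AddCommGroup N] [Module R N]
  [AddCommGroup N'] [Module R N']

theorem nonempty_linearEquiv_of_prod_equiv_prod_of_isSimpleModule [IsSimpleModule R S]
    [IsSemisimpleModule R N] (e : (S × N) ≃ₗ[R] (S × N')) : Nonempty (N ≃ₗ[R] N') := by
  set p := LinearMap.range (LinearMap.inl R S N)
  set p' := LinearMap.range (LinearMap.inl R S N')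
  set q := p'.map (e.symm : (S × N') →ₗ[R] (S × N))
  let ep : p ≃ₗ[R] S := (LinearEquiv.ofInjective _ LinearMap.inl_injective).symm
  let ep' : p' ≃ₗ[R] S := (LinearEquiv.ofInjective _ LinearMap.inl_injective).symm
  have : IsSimpleModule R p := .congr ep
  obtain ⟨f⟩ := nonempty_quotientEquiv_of_isSimpleModule <|
    ep.trans <| ep'.symm.trans (e.symm.submoduleMap p')
  have hq : q.map (e : (S × N) →ₗ[R] (S × N')) = p' := (map_symm_eq_iff e).mp rfl
  exact ⟨((quotEquivOfEq _ _ (LinearMap.ker_snd R S N)).symm.trans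
    (LinearMap.quotKerEquivOfSurjective _ LinearMap.snd_surjective)).symm.trans <| f.trans <|
    (Quotient.equiv q p' e hq).trans <| (quotEquivOfEq _ _ (LinearMap.ker_snd R S N')).symm.trans
    (LinearMap.quotKerEquivOfSurjective _ LinearMap.snd_surjective)⟩

variable {A B B' : Type*} [AddCommGroup A] [Module R A] [AddCommGroup B] [Module R B]
  [AddCommGroup B'] [Module R B']

theorem Submodule.nonempty_linearEquiv_of_prod_equiv_prod [IsSemisimpleModule R A]
    [IsArtinian R A] [IsSemisimpleModule R B] (P : Submodule R A)
    (e : (P × B) ≃ₗ[R] (P × B')) :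
    Nonempty (B ≃ₗ[R] B') := by
  induction P using WellFoundedLT.induction with
  | ind P ih =>
  obtain rfl | ⟨S, hSP, hS⟩ := IsSemisimpleModule.eq_bot_or_exists_simple_le P
  · exact ⟨LinearEquiv.uniqueProd.symm.trans (e.trans LinearEquiv.uniqueProd)⟩
  obtain ⟨T, hT⟩ := ComplementedLattice.exists_isCompl S
  have hSQ : Disjoint S (T ⊓ P) := hT.disjoint.mono_right inf_le_left
  have hP : S ⊔ T ⊓ P = P := by rw [← sup_inf_assoc_of_le _ hSP, hT.sup_eq_top, top_inf_eq]
  have hQP : T ⊓ P < P := inf_le_right.lt_of_ne fun h ↦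
    (isSimpleModule_iff_isAtom.mp hS).1 (hSQ.eq_bot_of_le (hSP.trans h.ge))
  let f : P ≃ₗ[R] S × ↥(T ⊓ P) :=
    (LinearEquiv.ofEq _ _ hP).symm.trans (prodEquivOfDisjoint hSQ).symm
  obtain ⟨g⟩ := nonempty_linearEquiv_of_prod_equiv_prod_of_isSimpleModule <|
    (LinearEquiv.prodAssoc R _ _ _).symm.trans <| (f.symm.prodCongr (.refl R B)).trans <|
    e.trans <| (f.prodCongr (.refl R B')).trans (LinearEquiv.prodAssoc R _ _ _)
  exact ih _ hQP g

theorem nonempty_linearEquiv_of_prod_equiv_prod [IsSemisimpleModule R A] [IsArtinian R A]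
    [IsSemisimpleModule R B] (e : (A × B) ≃ₗ[R] (A × B')) : Nonempty (B ≃ₗ[R] B') :=
  (⊤ : Submodule R A).nonempty_linearEquiv_of_prod_equiv_prod <|
    (topEquiv.prodCongr (.refl R B)).trans <| e.trans (topEquiv.symm.prodCongr (.refl R B'))

end Cancellation

theorem exists_le_sup_isCompl_of_isCompl_sup {α : Type*} [Lattice α] [BoundedOrder α]
    [IsModularLattice α] [ComplementedLattice α] {a b c : α} (h : IsCompl (a ⊔ b) c) :
    ∃ d ≤ b ⊔ c, IsCompl a d := by
  obtain ⟨d, hd⟩ := ComplementedLattice.exists_isCompl (a ⊓ b)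
  have hdisj : Disjoint a (d ⊓ b) := by
    rw [disjoint_iff, inf_comm d, ← inf_assoc, hd.inf_eq_bot]
  have hsup : a ⊔ d ⊓ b = a ⊔ b := by
    refine le_antisymm (sup_le_sup_left inf_le_right a) (sup_le le_sup_left ?_)
    calc b = (a ⊓ b ⊔ d) ⊓ b := by rw [hd.sup_eq_top, top_inf_eq]
      _ = a ⊓ b ⊔ d ⊓ b := sup_inf_assoc_of_le d inf_le_right
      _ ≤ a ⊔ d ⊓ b := sup_le_sup_right inf_le_left _
  exact ⟨d ⊓ b ⊔ c, sup_le_sup_right inf_le_right c,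
    hdisj.isCompl_sup_right_of_isCompl_sup_left (hsup ▸ h)⟩

section SemisimpleRing

variable {R : Type*} [Ring R]

theorem LinearEquiv.isUnit_apply_one (f : R ≃ₗ[R] R) : IsUnit (f 1) := by
  have hf : ∀ (g : R ≃ₗ[R] R) (x : R), g x = x * g 1 := fun g x ↦ by
    simpa using g.map_smul x 1
  exact ⟨⟨f 1, f.symm 1, by rw [← hf, symm_apply_apply], by rw [← hf, apply_symm_apply]⟩,
    rfl⟩

theorem IsIdempotentElem.mul_eq_self_of_mem_span {e x : R} (he : IsIdempotentElem e)
    (hx : x ∈ Ideal.span {e}) : x * e = x := by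
  obtain ⟨r, rfl⟩ := Ideal.mem_span_singleton'.mp hx
  rw [mul_assoc, he.eq]

theorem IsIdempotentElem.isCompl_span_ker {e : R} (he : IsIdempotentElem e) :
    IsCompl (Ideal.span {e}) (LinearMap.ker (LinearMap.toSpanSingleton R R e)) := by
  have : IsIdempotentElem (LinearMap.toSpanSingleton R R e) :=
    LinearMap.ext fun x ↦ by simp [mul_assoc, he.eq]
  simpa [← LinearMap.span_singleton_eq_range, Ideal.submodule_span_eq] using
    LinearMap.IsIdempotentElem.isCompl this

theorem exists_isUnit_add_of_isCompl [IsSemisimpleRing R] (a : R) {C : Ideal R}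
    (hC : IsCompl (Ideal.span {a}) C) : ∃ c ∈ C, IsUnit (a + c) := by
  set ρ := LinearMap.toSpanSingleton R R a
  obtain ⟨K, hK⟩ := ComplementedLattice.exists_isCompl (LinearMap.ker ρ)
  let eK : K ≃ₗ[R] Ideal.span {a} := (quotientEquivOfIsCompl _ K hK).symm.trans <|
    ρ.quotKerEquivRange.trans (.ofEq _ _ (LinearMap.span_singleton_eq_range R R a).symm)
  obtain ⟨ψ⟩ : Nonempty (LinearMap.ker ρ ≃ₗ[R] C) :=
    nonempty_linearEquiv_of_prod_equiv_prod <|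
      (LinearEquiv.prodComm R _ _).trans <| (prodEquivOfIsCompl _ _ hK).trans <|
      (prodEquivOfIsCompl _ _ hC).symm.trans (eK.symm.prodCongr (.refl R C))
  let σ : R ≃ₗ[R] R := (prodEquivOfIsCompl _ _ hK).symm.trans <|
    (ψ.prodCongr eK).trans (prodEquivOfIsCompl _ _ hC.symm)
  obtain ⟨⟨l, k⟩, hlk⟩ := (prodEquivOfIsCompl _ _ hK).surjective 1
  have hσ : σ 1 = ψ l + k * a := by simp [σ, ← hlk, eK, ρ]
  have hla : (l : R) * a = 0 := by
    simpa only [ρ, LinearMap.toSpanSingleton_apply, smul_eq_mul] using LinearMap.mem_ker.mp l.2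
  have hka : (k : R) * a = a := by
    have hlk' : (l : R) + k = 1 := by simpa using hlk
    calc (k : R) * a = (l + k) * a := by rw [add_mul, hla, zero_add]
      _ = a := by rw [hlk', one_mul]
  refine ⟨σ 1 - a, ?_, by simpa using σ.isUnit_apply_one⟩
  rw [hσ, hka, add_sub_cancel_right]
  exact (ψ l).2

end SemisimpleRing

theorem stmt_13_general (R : Type*) [Ring R] [IsSemisimpleRing R]
    (I : Ideal R) (a e : R) (he : IsIdempotentElem e)
    (h : Ideal.span {a} ⊔ I = Ideal.span {e}) :
    ∃ i ∈ I, ∃ u : Rˣ, a + i = (u : R) * e := by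
  obtain ⟨C, hCle, hC⟩ := exists_le_sup_isCompl_of_isCompl_sup (h ▸ he.isCompl_span_ker)
  obtain ⟨c, hcC, u, hu⟩ := exists_isUnit_add_of_isCompl a hC
  refine ⟨c * e, ?_, u, ?_⟩
  · obtain ⟨i, hi, f, hf, rfl⟩ := mem_sup.mp (hCle hcC)
    have hie : i * e = i := he.mul_eq_self_of_mem_span (h ▸ mem_sup_right hi)
    have hfe : f * e = 0 := by simpa using hf
    rwa [add_mul, hie, hfe, add_zero]
  · have hae : a * e = a :=
      he.mul_eq_self_of_mem_span (h ▸ mem_sup_left (Ideal.mem_span_singleton_self a))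
    rw [hu, add_mul, hae]

/-- In a semisimple Artinian ring, if Ra + I = Re with e idempotent, then
a + i = u·e for some i ∈ I and unit u. -/
theorem stmt_13 (R : Type*) [Ring R] [IsSemisimpleRing R] [IsArtinianRing R]
    (I : Ideal R) (a e : R) (he : IsIdempotentElem e)
    (h : Ideal.span {a} ⊔ I = Ideal.span {e}) :
    ∃ i ∈ I, ∃ u : Rˣ, a + i = (u : R) * e :=
  stmt_13_general R I a e he h
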